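/- arXiv:0810.1065 — 8 statements merged into one kernel-verified Lean document; each statement's English description precedes it below -/
import Mathlib

section
/- In a commutative loop Q whose inner mappings are automorphisms (commutative A-loop), for all x, y in Q and all integers n, the element x^n is fixed by the inner mapping L_{y,x} = L_x L_y L_{yx}^{-1} evaluated appropriately, i.e. x^n L_{y,x^m} = x^n for all integers m, n. -/
/-- A commutative loop: commutative binary operation with two-sided identity
and a left division making all translations bijective. -/
class CommLoop (Q : Type*) extends Mul Q, One Q where
  mul_comm : ∀ x y : Q, x * y = y * x
  one_mul : ∀ x : Q, 1 * x = x
  mul_one : ∀ x : Q, x * 1 = x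
  ldiv : Q → Q → Q
  mul_ldiv : ∀ x y : Q, x * ldiv x y = y
  ldiv_mul : ∀ x y : Q, ldiv x (x * y) = y

namespace CommLoop

variable {Q : Type*} [CommLoop Q]

/-- The inverse `x⁻¹ = x \ 1`. -/
def inv (x : Q) : Q := ldiv x 1

/-- The inner mapping `L_{x,y} = L_x L_y L_{yx}⁻¹` (permutations acting on the right):
`z L_{x,y} = (yx) \ (y(xz))`. -/
def inn (x y z : Q) : Q := ldiv (y * x) (y * (x * z))

/-- Natural powers: `x^n = 1 L_x^n`. -/
def npow (x : Q) (n : ℕ) : Q := (fun y => x * y)^[n] 1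

/-- Integer powers: `x^n = 1 L_x^n`. -/
def zpow (x : Q) : ℤ → Q
  | Int.ofNat n => npow x n
  | Int.negSucc n => (fun y => ldiv x y)^[n + 1] 1

/-- A commutative A-loop: every inner mapping `L_{x,y}` is an automorphism. -/
class IsALoop (Q : Type*) [CommLoop Q] : Prop where
  inn_mul : ∀ x y u v : Q, inn x y (u * v) = inn x y u * inn x y v

/-- The left translation `L_x` as a permutation of `Q`. -/
def Le (x : Q) : Equiv.Perm Q :=
  ⟨fun y => x * y, fun y => ldiv x y, fun y => ldiv_mul x y, fun y => mul_ldiv x y⟩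

/-- The permutation `P_x = L_x L_{x⁻¹}⁻¹`. -/
def Pe (x : Q) : Equiv.Perm Q := (Le x).trans (Le (inv x)).symm

end CommLoop

section AuxCL
set_option linter.unusedSectionVars false

open CommLoop (ldiv inn zpow npow inv mul_ldiv ldiv_mul)

variable {Q : Type*} [CommLoop Q]

private lemma CL_cancel (x : Q) {a b : Q} (h : x * a = x * b) : a = b := by
  have h2 := congrArg (ldiv x) h
  rwa [ldiv_mul, ldiv_mul] at h2

private lemma CL_eq_ldiv {x c d : Q} (h : x * d = c) : ldiv x c = d := by
  rw [← h, ldiv_mul]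

private lemma CL_one_ldiv (z : Q) : ldiv (1 : Q) z = z := by
  have h := ldiv_mul (1 : Q) z
  rwa [CommLoop.one_mul] at h

private lemma CL_mul_inv (x : Q) : x * inv x = 1 := mul_ldiv x 1

private lemma CL_inv_mul (x : Q) : inv x * x = 1 := by
  rw [CommLoop.mul_comm]; exact mul_ldiv x 1

private lemma CL_zpow_zero (x : Q) : zpow x 0 = 1 := rfl

private lemma CL_zpow_succ (x : Q) (n : ℤ) : zpow x (n + 1) = x * zpow x n := by
  cases n with
  | ofNat k =>
      show zpow x (Int.ofNat (k + 1)) = x * zpow x (Int.ofNat k)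
      show (fun y => x * y)^[k + 1] 1 = x * (fun y => x * y)^[k] 1
      rw [Function.iterate_succ_apply']
  | negSucc k =>
      cases k with
      | zero =>
          show (1 : Q) = x * ldiv x 1
          rw [mul_ldiv]
      | succ k' =>
          show zpow x (Int.negSucc k') = x * (fun y => ldiv x y)^[k' + 1 + 1] 1
          rw [Function.iterate_succ_apply']
          show zpow x (Int.negSucc k') = x * ldiv x ((fun y => ldiv x y)^[k' + 1] 1)
          rw [mul_ldiv]
          rfl

private lemma CL_zpow_pred (x : Q) (n : ℤ) : zpow x (n - 1) = ldiv x (zpow x n) := by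
  have h := CL_zpow_succ x (n - 1)
  have h2 : n - 1 + 1 = n := by omega
  rw [h2] at h
  rw [h, ldiv_mul]

private lemma CL_zpow_one (x : Q) : zpow x 1 = x := by
  have h := CL_zpow_succ x 0
  rw [zero_add, CL_zpow_zero, CommLoop.mul_one] at h
  exact h

private lemma CL_zpow_neg_one (x : Q) : zpow x (-1) = inv x := rfl

variable [CommLoop.IsALoop Q]

private lemma CL_inn_one (a b : Q) : inn a b 1 = 1 := by
  show ldiv (b * a) (b * (a * 1)) = 1
  rw [CommLoop.mul_one]
  exact CL_eq_ldiv (CommLoop.mul_one _)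

private lemma CL_inn_ldiv (a b u c : Q) :
    inn a b (ldiv u c) = ldiv (inn a b u) (inn a b c) :=
  (CL_eq_ldiv (by rw [← CommLoop.IsALoop.inn_mul, mul_ldiv])).symm

/-- `L_{x⁻¹} L_x = L_x L_{x⁻¹}` pointwise. -/
private lemma CL_inv_swap (x : Q) (c : Q) : inv x * (x * c) = x * (inv x * c) := by
  have key : ∀ z : Q, inn (inv x) x z = x * (inv x * z) := by
    intro z
    show ldiv (x * inv x) (x * (inv x * z)) = x * (inv x * z)
    rw [CL_mul_inv, CL_one_ldiv]
  have h := CommLoop.IsALoop.inn_mul (inv x) x x c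
  rw [key (x * c), key x, key c, CL_inv_mul, CommLoop.mul_one] at h
  exact CL_cancel x h

private lemma CL_inv_swap_ldiv (x : Q) (c : Q) :
    inv x * ldiv x c = ldiv x (inv x * c) :=
  (CL_eq_ldiv (by rw [← CL_inv_swap, mul_ldiv])).symm

private lemma CL_inv_mul_zpow (x : Q) (j : ℤ) : inv x * zpow x j = zpow x (j - 1) := by
  induction j using Int.induction_on with
  | zero =>
      rw [CL_zpow_zero, CommLoop.mul_one, show (0 : ℤ) - 1 = -1 by omega, CL_zpow_neg_one]
  | succ i ih =>
      calc inv x * zpow x ((i : ℤ) + 1)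
          = inv x * (x * zpow x (i : ℤ)) := by rw [CL_zpow_succ]
        _ = x * (inv x * zpow x (i : ℤ)) := CL_inv_swap x _
        _ = x * zpow x ((i : ℤ) - 1) := by rw [ih]
        _ = zpow x ((i : ℤ) - 1 + 1) := (CL_zpow_succ x _).symm
        _ = zpow x ((i : ℤ) + 1 - 1) := by norm_num
  | pred i ih =>
      calc inv x * zpow x (-(i : ℤ) - 1)
          = inv x * ldiv x (zpow x (-(i : ℤ))) := by rw [CL_zpow_pred]
        _ = ldiv x (inv x * zpow x (-(i : ℤ))) := CL_inv_swap_ldiv x _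
        _ = ldiv x (zpow x (-(i : ℤ) - 1)) := by rw [ih]
        _ = zpow x (-(i : ℤ) - 1 - 1) := (CL_zpow_pred x _).symm

private lemma CL_ldiv_inv_zpow (x : Q) (j : ℤ) : ldiv (inv x) (zpow x j) = zpow x (j + 1) :=
  CL_eq_ldiv (by rw [CL_inv_mul_zpow, add_sub_cancel_right])

/-- `ξ_m := inn x^m x` fixes `x`. -/
private lemma CL_xi_fix_x (x : Q) (m : ℤ) : inn (zpow x m) x x = x := by
  show ldiv (x * zpow x m) (x * (zpow x m * x)) = x
  rw [CommLoop.mul_comm (zpow x m) x, ← CL_zpow_succ,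
    CommLoop.mul_comm x (zpow x (m + 1)), ldiv_mul]

private lemma CL_xi_fix_zpow (x : Q) (m k : ℤ) : inn (zpow x m) x (zpow x k) = zpow x k := by
  induction k using Int.induction_on with
  | zero => rw [CL_zpow_zero]; exact CL_inn_one _ _
  | succ i ih => rw [CL_zpow_succ, CommLoop.IsALoop.inn_mul, CL_xi_fix_x, ih]
  | pred i ih => rw [CL_zpow_pred x (-(i : ℤ)), CL_inn_ldiv, CL_xi_fix_x, ih]

private lemma CL_xi_key (x : Q) (m : ℤ) (c : Q) :
    zpow x (m + 1) * inn (zpow x m) x c = x * (zpow x m * c) := by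
  show zpow x (m + 1) * ldiv (x * zpow x m) (x * (zpow x m * c)) = x * (zpow x m * c)
  rw [CL_zpow_succ, mul_ldiv]

private lemma CL_xi_surj (x : Q) (m : ℤ) (c : Q) : ∃ d, inn (zpow x m) x d = c := by
  refine ⟨ldiv (zpow x m) (ldiv x (x * zpow x m * c)), ?_⟩
  show ldiv (x * zpow x m) (x * (zpow x m * ldiv (zpow x m) (ldiv x (x * zpow x m * c)))) = c
  rw [mul_ldiv, mul_ldiv, ldiv_mul]

/-- `ζ_m := inn x^m x⁻¹` fixes `x⁻¹`. -/
private lemma CL_zeta_fix_inv (x : Q) (m : ℤ) : inn (zpow x m) (inv x) (inv x) = inv x := by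
  show ldiv (inv x * zpow x m) (inv x * (zpow x m * inv x)) = inv x
  rw [CommLoop.mul_comm (zpow x m) (inv x),
    CommLoop.mul_comm (inv x) (inv x * zpow x m), ldiv_mul]

private lemma CL_zeta_fix_zpow (x : Q) (m k : ℤ) :
    inn (zpow x m) (inv x) (zpow x k) = zpow x k := by
  induction k using Int.induction_on with
  | zero => rw [CL_zpow_zero]; exact CL_inn_one _ _
  | succ i ih => rw [← CL_ldiv_inv_zpow x (i : ℤ), CL_inn_ldiv, CL_zeta_fix_inv, ih]
  | pred i ih => rw [← CL_inv_mul_zpow x (-(i : ℤ)), CommLoop.IsALoop.inn_mul, CL_zeta_fix_inv, ih]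

private lemma CL_zeta_key (x : Q) (m : ℤ) (c : Q) :
    zpow x (m - 1) * inn (zpow x m) (inv x) c = inv x * (zpow x m * c) := by
  show zpow x (m - 1) * ldiv (inv x * zpow x m) (inv x * (zpow x m * c)) = inv x * (zpow x m * c)
  rw [CL_inv_mul_zpow, mul_ldiv]

private lemma CL_zeta_surj (x : Q) (m : ℤ) (c : Q) : ∃ d, inn (zpow x m) (inv x) d = c := by
  refine ⟨ldiv (zpow x m) (ldiv (inv x) (inv x * zpow x m * c)), ?_⟩
  show ldiv (inv x * zpow x m)
    (inv x * (zpow x m * ldiv (zpow x m) (ldiv (inv x) (inv x * zpow x m * c)))) = c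
  rw [mul_ldiv, mul_ldiv, ldiv_mul]

/-- `L_x` commutes with `L_{x^n}`. -/
private lemma CL_comm_one (x : Q) (n : ℤ) :
    ∀ c : Q, x * (zpow x n * c) = zpow x n * (x * c) := by
  induction n using Int.induction_on with
  | zero => intro c; rw [CL_zpow_zero, CommLoop.one_mul, CommLoop.one_mul]
  | succ i ih =>
      intro c
      obtain ⟨d, rfl⟩ := CL_xi_surj x (i : ℤ) c
      calc x * (zpow x ((i : ℤ) + 1) * inn (zpow x (i : ℤ)) x d)
          = x * (x * (zpow x (i : ℤ) * d)) := by rw [CL_xi_key]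
        _ = x * (zpow x (i : ℤ) * (x * d)) := by rw [ih d]
        _ = zpow x ((i : ℤ) + 1) * inn (zpow x (i : ℤ)) x (x * d) :=
            (CL_xi_key x (i : ℤ) (x * d)).symm
        _ = zpow x ((i : ℤ) + 1) * (x * inn (zpow x (i : ℤ)) x d) := by
            rw [CommLoop.IsALoop.inn_mul, CL_xi_fix_x]
  | pred i ih =>
      intro c
      obtain ⟨d, rfl⟩ := CL_zeta_surj x (-(i : ℤ)) c
      have hx : inn (zpow x (-(i : ℤ))) (inv x) x = x := by
        have h := CL_zeta_fix_zpow x (-(i : ℤ)) 1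
        rwa [CL_zpow_one] at h
      calc x * (zpow x (-(i : ℤ) - 1) * inn (zpow x (-(i : ℤ))) (inv x) d)
          = x * (inv x * (zpow x (-(i : ℤ)) * d)) := by rw [CL_zeta_key]
        _ = inv x * (x * (zpow x (-(i : ℤ)) * d)) := by rw [← CL_inv_swap]
        _ = inv x * (zpow x (-(i : ℤ)) * (x * d)) := by rw [ih d]
        _ = zpow x (-(i : ℤ) - 1) * inn (zpow x (-(i : ℤ))) (inv x) (x * d) :=
            (CL_zeta_key x (-(i : ℤ)) (x * d)).symm
        _ = zpow x (-(i : ℤ) - 1) * (x * inn (zpow x (-(i : ℤ))) (inv x) d) := by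
            rw [CommLoop.IsALoop.inn_mul, hx]

/-- `L_{x⁻¹}` commutes with `L_{x^n}`. -/
private lemma CL_comm_neg_one (x : Q) (n : ℤ) :
    ∀ c : Q, inv x * (zpow x n * c) = zpow x n * (inv x * c) := by
  induction n using Int.induction_on with
  | zero => intro c; rw [CL_zpow_zero, CommLoop.one_mul, CommLoop.one_mul]
  | succ i ih =>
      intro c
      obtain ⟨d, rfl⟩ := CL_xi_surj x (i : ℤ) c
      have hiv : inn (zpow x (i : ℤ)) x (inv x) = inv x := by
        have h := CL_xi_fix_zpow x (i : ℤ) (-1)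
        rwa [CL_zpow_neg_one] at h
      calc inv x * (zpow x ((i : ℤ) + 1) * inn (zpow x (i : ℤ)) x d)
          = inv x * (x * (zpow x (i : ℤ) * d)) := by rw [CL_xi_key]
        _ = x * (inv x * (zpow x (i : ℤ) * d)) := by rw [CL_inv_swap]
        _ = x * (zpow x (i : ℤ) * (inv x * d)) := by rw [ih d]
        _ = zpow x ((i : ℤ) + 1) * inn (zpow x (i : ℤ)) x (inv x * d) :=
            (CL_xi_key x (i : ℤ) (inv x * d)).symm
        _ = zpow x ((i : ℤ) + 1) * (inv x * inn (zpow x (i : ℤ)) x d) := by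
            rw [CommLoop.IsALoop.inn_mul, hiv]
  | pred i ih =>
      intro c
      obtain ⟨d, rfl⟩ := CL_zeta_surj x (-(i : ℤ)) c
      calc inv x * (zpow x (-(i : ℤ) - 1) * inn (zpow x (-(i : ℤ))) (inv x) d)
          = inv x * (inv x * (zpow x (-(i : ℤ)) * d)) := by rw [CL_zeta_key]
        _ = inv x * (zpow x (-(i : ℤ)) * (inv x * d)) := by rw [ih d]
        _ = zpow x (-(i : ℤ) - 1) * inn (zpow x (-(i : ℤ))) (inv x) (inv x * d) :=
            (CL_zeta_key x (-(i : ℤ)) (inv x * d)).symm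
        _ = zpow x (-(i : ℤ) - 1) * (inv x * inn (zpow x (-(i : ℤ))) (inv x) d) := by
            rw [CommLoop.IsALoop.inn_mul, CL_zeta_fix_inv]

/-- Main commutation: `L_{x^m}` commutes with `L_{x^n}`. -/
private lemma CL_comm_zpow (x : Q) (m : ℤ) :
    ∀ (n : ℤ) (c : Q), zpow x m * (zpow x n * c) = zpow x n * (zpow x m * c) := by
  induction m using Int.induction_on with
  | zero => intro n c; rw [CL_zpow_zero, CommLoop.one_mul, CommLoop.one_mul]
  | succ i ih =>
      intro n c
      obtain ⟨d, rfl⟩ := CL_xi_surj x (i : ℤ) c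
      calc zpow x ((i : ℤ) + 1) * (zpow x n * inn (zpow x (i : ℤ)) x d)
          = zpow x ((i : ℤ) + 1) * inn (zpow x (i : ℤ)) x (zpow x n * d) := by
            rw [CommLoop.IsALoop.inn_mul, CL_xi_fix_zpow]
        _ = x * (zpow x (i : ℤ) * (zpow x n * d)) := CL_xi_key x (i : ℤ) (zpow x n * d)
        _ = x * (zpow x n * (zpow x (i : ℤ) * d)) := by rw [ih n d]
        _ = zpow x n * (x * (zpow x (i : ℤ) * d)) := by
            rw [CL_comm_one x n (zpow x (i : ℤ) * d)]
        _ = zpow x n * (zpow x ((i : ℤ) + 1) * inn (zpow x (i : ℤ)) x d) := by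
            rw [← CL_xi_key x (i : ℤ) d]
  | pred i ih =>
      intro n c
      obtain ⟨d, rfl⟩ := CL_zeta_surj x (-(i : ℤ)) c
      calc zpow x (-(i : ℤ) - 1) * (zpow x n * inn (zpow x (-(i : ℤ))) (inv x) d)
          = zpow x (-(i : ℤ) - 1) * inn (zpow x (-(i : ℤ))) (inv x) (zpow x n * d) := by
            rw [CommLoop.IsALoop.inn_mul, CL_zeta_fix_zpow]
        _ = inv x * (zpow x (-(i : ℤ)) * (zpow x n * d)) :=
            CL_zeta_key x (-(i : ℤ)) (zpow x n * d)
        _ = inv x * (zpow x n * (zpow x (-(i : ℤ)) * d)) := by rw [ih n d]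
        _ = zpow x n * (inv x * (zpow x (-(i : ℤ)) * d)) := by
            rw [CL_comm_neg_one x n (zpow x (-(i : ℤ)) * d)]
        _ = zpow x n * (zpow x (-(i : ℤ) - 1) * inn (zpow x (-(i : ℤ))) (inv x) d) := by
            rw [← CL_zeta_key x (-(i : ℤ)) d]

end AuxCL

open CommLoop in
/-- `x^n L_{y, x^m} = x^n` for all integers `m, n`. -/
theorem stmt0 {Q : Type*} [CommLoop Q] [IsALoop Q] (x y : Q) (m n : ℤ) :
    inn y (zpow x m) (zpow x n) = zpow x n := by
  show ldiv (zpow x m * y) (zpow x m * (y * zpow x n)) = zpow x n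
  rw [CommLoop.mul_comm y (zpow x n), CL_comm_zpow x m n y,
    CommLoop.mul_comm (zpow x n) (zpow x m * y), ldiv_mul]
end

section
/- Every commutative A-loop is power-associative: for each x, the subloop generated by x is a group; equivalently, x^m x^n = x^{m+n} for all integers m, n. -/
namespace CommLoop

variable {Q : Type*} [CommLoop Q]

theorem left_cancel {a b c : Q} (h : a * b = a * c) : b = c := by
  have h2 := congrArg (ldiv a) h
  rwa [ldiv_mul, ldiv_mul] at h2

theorem npow_succ' (x : Q) (n : ℕ) : npow x (n + 1) = x * npow x n :=
  Function.iterate_succ_apply' (fun y => x * y) n 1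

theorem zpow_succ (x : Q) (k : ℤ) : zpow x (k + 1) = x * zpow x k := by
  cases k with
  | ofNat n =>
      have h : (Int.ofNat n) + 1 = Int.ofNat (n + 1) := rfl
      rw [h]
      show npow x (n + 1) = x * npow x n
      exact npow_succ' x n
  | negSucc n =>
      cases n with
      | zero =>
          have h : Int.negSucc 0 + 1 = Int.ofNat 0 := by decide
          rw [h]
          show (1 : Q) = x * ldiv x 1
          exact (mul_ldiv x 1).symm
      | succ m =>
          have h : Int.negSucc (m + 1) + 1 = Int.negSucc m := by rw [Int.negSucc_eq, Int.negSucc_eq]; omega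
          rw [h]
          show (fun y => ldiv x y)^[m + 1] 1
              = x * (fun y => ldiv x y)^[m + 2] 1
          rw [Function.iterate_succ_apply' (fun y => ldiv x y) (m + 1) 1]
          exact (mul_ldiv x _).symm

theorem ldiv_zpow (x : Q) (k : ℤ) : ldiv x (zpow x k) = zpow x (k - 1) := by
  have h := zpow_succ x (k - 1)
  rw [sub_add_cancel] at h
  rw [h, ldiv_mul]

theorem inn_one [IsALoop Q] (u v : Q) : inn u v (1 : Q) = 1 := by
  have h := IsALoop.inn_mul u v (1 : Q) 1
  rw [mul_one] at h
  have h2 : inn u v (1 : Q) * 1 = inn u v 1 * inn u v 1 := by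
    rw [mul_one]; exact h
  exact (left_cancel h2).symm

theorem inn_fix_zpow [IsALoop Q] (u v x : Q) (hx : inn u v x = x) (k : ℤ) :
    inn u v (zpow x k) = zpow x k := by
  induction k using Int.induction_on with
  | zero => exact inn_one u v
  | succ i ih =>
      rw [zpow_succ, IsALoop.inn_mul, hx, ih]
  | pred i ih =>
      have h : zpow x (-(i : ℤ)) = x * zpow x (-(i : ℤ) - 1) := by
        have := zpow_succ x (-(i : ℤ) - 1)
        rwa [sub_add_cancel] at this
      have h2 : x * inn u v (zpow x (-(i : ℤ) - 1)) = x * zpow x (-(i : ℤ) - 1) := by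
        calc x * inn u v (zpow x (-(i : ℤ) - 1))
            = inn u v x * inn u v (zpow x (-(i : ℤ) - 1)) := by rw [hx]
          _ = inn u v (x * zpow x (-(i : ℤ) - 1)) := (IsALoop.inn_mul u v _ _).symm
          _ = inn u v (zpow x (-(i : ℤ))) := by rw [← h]
          _ = zpow x (-(i : ℤ)) := ih
          _ = x * zpow x (-(i : ℤ) - 1) := h
      exact left_cancel h2

/-- The fundamental identity `(y u) · L_{u,y}(w) = y (u w)`. -/
theorem mul_inn (u y w : Q) : (y * u) * inn u y w = y * (u * w) :=
  mul_ldiv (y * u) (y * (u * w))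

/-- The inner mapping `L_{x^a, x}` fixes `x`. -/
theorem inn_zpow_fix (x : Q) (a : ℤ) : inn (zpow x a) x x = x := by
  show ldiv (x * zpow x a) (x * (zpow x a * x)) = x
  rw [mul_comm (zpow x a) x, ← zpow_succ, ← zpow_succ, zpow_succ x (a + 1),
    mul_comm x (zpow x (a + 1)), ldiv_mul]

end CommLoop

open CommLoop in
/-- Power-associativity: `x^m x^n = x^{m+n}` for all integers `m, n`. -/
theorem stmt1 {Q : Type*} [CommLoop Q] [IsALoop Q] (x : Q) (m n : ℤ) :
    zpow x m * zpow x n = zpow x (m + n) := by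
  induction m using Int.induction_on with
  | zero =>
      show (1 : Q) * zpow x n = zpow x (0 + n)
      rw [CommLoop.one_mul, zero_add]
  | succ k ih =>
      have hfix := inn_fix_zpow (zpow x k) x x (inn_zpow_fix x k) n
      have h := mul_inn (zpow x k) x (zpow x n)
      rw [hfix, ← zpow_succ, ih, ← zpow_succ] at h
      rw [h]
      congr 1
      omega
  | pred k ih =>
      set a : ℤ := -(k : ℤ) - 1 with ha
      have hfix := inn_fix_zpow (zpow x a) x x (inn_zpow_fix x a) n
      have h := mul_inn (zpow x a) x (zpow x n)
      rw [hfix, ← zpow_succ] at h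
      have he : a + 1 = -(k : ℤ) := by omega
      rw [he, ih] at h
      have h2 : zpow x (-(k : ℤ) + n) = x * zpow x (a + n) := by
        rw [← zpow_succ]
        congr 1
        omega
      rw [h2] at h
      exact left_cancel h.symm
end

section
/- In a commutative A-loop, the left translations by powers of a single element commute: L_{x^m} L_{x^n} = L_{x^n} L_{x^m} for all integers m, n. -/
set_option linter.unusedSectionVars false

namespace CommLoopProof

open CommLoop

variable {Q : Type*} [CommLoop Q]

lemma mul_left_cancel {x a b : Q} (h : x * a = x * b) : a = b := by
  have := ldiv_mul x a
  rw [h, ldiv_mul] at this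
  exact this.symm

lemma ldiv_self (x : Q) : ldiv x x = 1 := by
  have := ldiv_mul x (1 : Q)
  rwa [CommLoop.mul_one] at this

lemma mul_inv (x : Q) : x * inv x = 1 := mul_ldiv x 1

lemma inv_mul (x : Q) : inv x * x = 1 := by rw [CommLoop.mul_comm]; exact mul_inv x

lemma eq_inv_of {a b : Q} (h : a * b = 1) : b = inv a := by
  have := ldiv_mul a b
  rw [h] at this
  exact this.symm

lemma inv_inv (x : Q) : inv (inv x) = x := by
  exact (eq_inv_of (inv_mul x)).symm

lemma one_ldiv (y : Q) : ldiv 1 y = y := by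
  have := ldiv_mul (1 : Q) y
  rwa [CommLoop.one_mul] at this

variable [IsALoop Q]

lemma inn_one (x y : Q) : inn x y (1 : Q) = 1 := by
  unfold inn
  rw [CommLoop.mul_one, ldiv_self]

lemma inn_inv (x y u : Q) : inn x y (inv u) = inv (inn x y u) := by
  apply eq_inv_of
  rw [← IsALoop.inn_mul, mul_inv, inn_one]

/-- `P = inn x x⁻¹` is the map `z ↦ x⁻¹ (x z)`. -/
lemma inn_inv_apply (x z : Q) : inn x (inv x) z = inv x * (x * z) := by
  unfold inn
  rw [inv_mul, one_ldiv]

lemma P_fix_inv (x : Q) : inv x * (x * inv x) = inv x := by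
  rw [mul_inv, CommLoop.mul_one]

lemma P_fix (x : Q) : inv x * (x * x) = x := by
  have h1 : inn x (inv x) (inv x) = inv x := by
    rw [inn_inv_apply, P_fix_inv]
  have h2 : inn x (inv x) x = x := by
    have := inn_inv x (inv x) (inv x)
    rw [h1, inv_inv] at this
    exact this
  rw [inn_inv_apply] at h2
  exact h2

/-- `L_x` and `L_{x⁻¹}` commute. -/
lemma comm_inv (x : Q) : ∀ z : Q, x * (inv x * z) = inv x * (x * z) := by
  intro z
  have key : ∀ w : Q, inv x * (x * (x * w)) = x * (inv x * (x * w)) := by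
    intro w
    have := IsALoop.inn_mul x (inv x) x w
    rw [inn_inv_apply, inn_inv_apply, inn_inv_apply, P_fix] at this
    exact this
  have := key (ldiv x z)
  rw [mul_ldiv] at this
  exact this.symm

/-- Key lemma: if `L_a` commutes with `L_b` and `L_b` commutes with `L_x`,
then `L_{xa}` commutes with `L_b`. -/
lemma comm_step (x a b : Q) (hab : ∀ z : Q, a * (b * z) = b * (a * z))
    (hbx : ∀ z : Q, b * (x * z) = x * (b * z)) :
    ∀ z : Q, (x * a) * (b * z) = b * ((x * a) * z) := by
  have hinn : ∀ s : Q, (x * a) * inn a x s = x * (a * s) := by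
    intro s
    exact mul_ldiv _ _
  have hb : inn a x b = b := by
    have h1 : x * (a * b) = (x * a) * b := by
      rw [CommLoop.mul_comm (x * a) b, hbx a, CommLoop.mul_comm b a]
    unfold inn
    rw [h1, ldiv_mul]
  intro z
  set t := ldiv a (ldiv x ((x * a) * z)) with ht
  have hθt : inn a x t = z := by
    unfold inn
    rw [ht, mul_ldiv, mul_ldiv, ldiv_mul]
  calc (x * a) * (b * z) = (x * a) * (inn a x b * inn a x t) := by rw [hb, hθt]
    _ = (x * a) * inn a x (b * t) := by rw [← IsALoop.inn_mul]
    _ = x * (a * (b * t)) := hinn _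
    _ = x * (b * (a * t)) := by rw [hab]
    _ = b * (x * (a * t)) := (hbx _).symm
    _ = b * ((x * a) * inn a x t) := by rw [hinn]
    _ = b * ((x * a) * z) := by rw [hθt]

lemma zpow_zero (x : Q) : zpow x 0 = 1 := rfl

lemma zpow_succ (x : Q) : ∀ k : ℤ, zpow x (k + 1) = x * zpow x k := by
  intro k
  cases k with
  | ofNat n =>
      show zpow x (Int.ofNat (n + 1)) = x * zpow x (Int.ofNat n)
      show npow x (n + 1) = x * npow x n
      unfold npow
      rw [Function.iterate_succ_apply']
  | negSucc n =>
      cases n with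
      | zero =>
          show zpow x 0 = x * zpow x (Int.negSucc 0)
          show (1 : Q) = x * (fun y => ldiv x y)^[1] 1
          simp [mul_ldiv]
      | succ m =>
          show zpow x (Int.negSucc m) = x * zpow x (Int.negSucc (m + 1))
          show (fun y => ldiv x y)^[m + 1] 1 = x * (fun y => ldiv x y)^[m + 2] 1
          rw [Function.iterate_succ_apply' (fun y => ldiv x y) (m + 1)]
          rw [mul_ldiv]

/-- Fixed-point property: if `L_w` commutes with `L_x` and `L_{x⁻¹}` then
`x (x⁻¹ w) = w`. -/
lemma Q_fix_of_comm (x w : Q) (hx : ∀ z : Q, w * (x * z) = x * (w * z))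
    (hix : ∀ z : Q, w * (inv x * z) = inv x * (w * z)) :
    x * (inv x * w) = w := by
  have h1 : inv x * w = w * inv x := by
    have h := hix 1
    rw [CommLoop.mul_one, CommLoop.mul_one] at h
    exact h.symm
  have h2 : x * (w * inv x) = w := by
    have := hx (inv x)
    rw [mul_inv, CommLoop.mul_one] at this
    exact this.symm
  rw [h1, h2]

lemma zpow_pred (x : Q) (k : ℤ) (hx : ∀ z : Q, zpow x k * (x * z) = x * (zpow x k * z))
    (hix : ∀ z : Q, zpow x k * (inv x * z) = inv x * (zpow x k * z)) :
    zpow x (k - 1) = inv x * zpow x k := by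
  apply mul_left_cancel (x := x)
  have h1 : x * zpow x (k - 1) = zpow x k := by
    rw [← zpow_succ x (k - 1), sub_add_cancel]
  rw [h1, Q_fix_of_comm x (zpow x k) hx hix]

/-- Every `L_{x^n}` commutes with `L_x` and `L_{x⁻¹}`. -/
lemma com_pow_x (x : Q) : ∀ n : ℤ,
    (∀ z : Q, zpow x n * (x * z) = x * (zpow x n * z)) ∧
    (∀ z : Q, zpow x n * (inv x * z) = inv x * (zpow x n * z)) := by
  intro n
  induction n using Int.induction_on with
  | zero =>
      constructor <;> intro z <;> rw [zpow_zero, CommLoop.one_mul, CommLoop.one_mul]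
  | succ i ih =>
      rw [zpow_succ]
      constructor
      · exact comm_step x (zpow x i) x ih.1 (fun z => rfl)
      · exact comm_step x (zpow x i) (inv x) ih.2 (fun z => (comm_inv x z).symm)
  | pred i ih =>
      have hpred : zpow x (-(i : ℤ) - 1) = inv x * zpow x (-(i : ℤ)) :=
        zpow_pred x (-(i : ℤ)) ih.1 ih.2
      rw [hpred]
      constructor
      · exact comm_step (inv x) (zpow x (-(i : ℤ))) x ih.1 (fun z => comm_inv x z)
      · exact comm_step (inv x) (zpow x (-(i : ℤ))) (inv x) ih.2 (fun z => rfl)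

lemma com_pow_pow (x : Q) (n : ℤ) : ∀ m : ℤ,
    ∀ z : Q, zpow x m * (zpow x n * z) = zpow x n * (zpow x m * z) := by
  intro m
  induction m using Int.induction_on with
  | zero => intro z; rw [zpow_zero, CommLoop.one_mul, CommLoop.one_mul]
  | succ i ih =>
      rw [zpow_succ]
      exact comm_step x (zpow x i) (zpow x n) ih (com_pow_x x n).1
  | pred i ih =>
      have hpred : zpow x (-(i : ℤ) - 1) = inv x * zpow x (-(i : ℤ)) :=
        zpow_pred x (-(i : ℤ)) (com_pow_x x (-(i : ℤ))).1 (com_pow_x x (-(i : ℤ))).2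
      rw [hpred]
      exact comm_step (inv x) (zpow x (-(i : ℤ))) (zpow x n) ih (com_pow_x x n).2

end CommLoopProof

open CommLoop in
/-- `L_{x^m} L_{x^n} = L_{x^n} L_{x^m}` for all integers `m, n`. -/
theorem stmt2 {Q : Type*} [CommLoop Q] [IsALoop Q] (x : Q) (m n : ℤ) :
    ∀ z : Q, zpow x n * (zpow x m * z) = zpow x m * (zpow x n * z) := by
  exact CommLoopProof.com_pow_pow x m n
end

section
/- In a commutative A-loop, the identity x y^2 = (xy)·((xy)\x)^{-1} holds for all x, y, where \ denotes left division and inverses are two-sided. -/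
open CommLoop in
/-- `x y² = (xy)·((xy)\x)⁻¹`. -/
theorem stmt3 {Q : Type*} [CommLoop Q] [IsALoop Q] (x y : Q) :
    x * (y * y) = (x * y) * inv (ldiv (x * y) x) := by
  have cancel : ∀ a u v : Q, a * u = a * v → u = v := by
    intro a u v h
    have := congrArg (ldiv a) h
    rwa [ldiv_mul, ldiv_mul] at this
  -- inverses: a * inv a = 1 by definition; inv a * a = 1 by commutativity
  have mul_inv : ∀ a : Q, a * inv a = 1 := fun a => mul_ldiv a 1
  have inv_inv : ∀ a : Q, inv (inv a) = a := by
    intro a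
    exact cancel (inv a) _ _ (by rw [mul_inv, CommLoop.mul_comm, mul_inv])
  have ldiv_self : ∀ a : Q, ldiv a a = 1 := by
    intro a
    have := ldiv_mul a 1
    rwa [CommLoop.mul_one] at this
  -- φ z = inn y x z = (xy)\(x(yz))
  have inn_def : ∀ z : Q, inn y x z = ldiv (x * y) (x * (y * z)) := fun z => rfl
  have h1 : inn y x (inv y) = ldiv (x * y) x := by
    rw [inn_def, mul_inv, CommLoop.mul_one]
  have h2 : inn y x y = ldiv (x * y) (x * (y * y)) := inn_def y
  have h3 : inn y x y * inn y x (inv y) = 1 := by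
    rw [← IsALoop.inn_mul, mul_inv, inn_def, CommLoop.mul_one, ldiv_self]
  have h4 : inn y x (inv y) = inv (inn y x y) := by
    apply cancel (inn y x y)
    rw [h3, mul_inv]
  calc x * (y * y) = (x * y) * ldiv (x * y) (x * (y * y)) := (mul_ldiv _ _).symm
    _ = (x * y) * inv (ldiv (x * y) x) := by rw [← h2, ← h1, h4, inv_inv]
end

section
/- Every commutative A-loop has the automorphic inverse property: (xy)^{-1} = x^{-1} y^{-1} for all x, y. -/
namespace CommLoop

variable {Q : Type*} [CommLoop Q]

/- Auxiliary lemmas for the proof of the automorphic inverse property. -/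

theorem ldiv_self (a : Q) : ldiv a a = 1 := by
  have h := ldiv_mul a (1 : Q)
  rwa [mul_one] at h

theorem mul_inv (a : Q) : a * inv a = 1 := mul_ldiv a 1

theorem inv_mul (a : Q) : inv a * a = 1 := by rw [mul_comm]; exact mul_inv a

theorem eq_inv_of_mul_eq_one {a b : Q} (h : a * b = 1) : b = inv a := by
  have h1 : ldiv a (a * b) = ldiv a 1 := by rw [h]
  rwa [ldiv_mul] at h1

theorem inv_inv (a : Q) : inv (inv a) = a :=
  (eq_inv_of_mul_eq_one (inv_mul a)).symm

variable [IsALoop Q]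

theorem inn_one_s4 (a b : Q) : inn a b (1 : Q) = 1 := by
  unfold inn
  rw [mul_one, ldiv_self]

theorem inn_inv (a b u : Q) : inn a b (inv u) = inv (inn a b u) := by
  apply eq_inv_of_mul_eq_one
  rw [← IsALoop.inn_mul, mul_inv, inn_one_s4]

/-- `ψ = inn y x` fixes `x`. -/
theorem inn_self (x y : Q) : inn y x x = x := by
  unfold inn
  rw [mul_comm y x, mul_comm x (x * y), ldiv_mul]

/-- `ψ(y⁻¹) = (xy) \ x`. -/
theorem inn_inv_arg (x y : Q) : inn y x (inv y) = ldiv (x * y) x := by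
  unfold inn
  rw [mul_inv, mul_one]

/-- Key identity: `x⁻¹ = ((xy)\x)⁻¹ · (xy)⁻¹`. -/
theorem key (x y : Q) : inv x = inv (ldiv (x * y) x) * inv (x * y) := by
  have hy : inn y x y = inv (ldiv (x * y) x) := by
    have h := inn_inv y x y
    rw [inn_inv_arg] at h
    rw [← inv_inv (inn y x y), h]
  have hw : inn y x (ldiv y (inv x)) = inv (x * y) := by
    unfold inn
    rw [mul_ldiv y (inv x), mul_inv]
    rfl
  have hmul := IsALoop.inn_mul y x y (ldiv y (inv x))
  rw [mul_ldiv y (inv x)] at hmul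
  rw [inn_inv, inn_self, hy, hw] at hmul
  exact hmul

end CommLoop

open CommLoop in
/-- The automorphic inverse property: `(xy)⁻¹ = x⁻¹ y⁻¹`. -/
theorem stmt4 {Q : Type*} [CommLoop Q] [IsALoop Q] (x y : Q) :
    inv (x * y) = inv x * inv y := by
  have h := key (x * y) (ldiv (x * y) x)
  rw [mul_ldiv (x * y) x, ldiv_mul] at h
  rw [h, CommLoop.mul_comm]
end

section
/- In a commutative A-loop, the inner mapping L_{x,y} factors as L_{x,y} = L_{x^{-1}\y}^{-1} L_x L_y for all x, y. -/
namespace CommLoop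

theorem inn_ldiv {Q : Type*} [CommLoop Q] [IsALoop Q] (x y a b : Q) :
    inn x y (ldiv a b) = ldiv (inn x y a) (inn x y b) := by
  have h : inn x y a * inn x y (ldiv a b) = inn x y b := by
    rw [← IsALoop.inn_mul, mul_ldiv]
  rw [← h, ldiv_mul]

theorem inn_key {Q : Type*} [CommLoop Q] [IsALoop Q] (x y : Q) :
    inn x y (ldiv (inv x) y) = y * x := by
  have h1 : inn x y (inv x) = ldiv (y * x) y := by
    unfold inn
    rw [show x * inv x = 1 from mul_ldiv x 1, mul_one]
  have h2 : ldiv (y * x) (y * (x * y)) = ldiv (y * x) y * (y * x) := by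
    have h : y * (x * y) = (y * x) * (ldiv (y * x) y * (y * x)) := by
      rw [CommLoop.mul_comm (ldiv (y * x) y), mul_ldiv,
        CommLoop.mul_comm y (x * y), CommLoop.mul_comm x y]
    rw [h, ldiv_mul]
  rw [inn_ldiv, h1]
  show ldiv (ldiv (y * x) y) (inn x y y) = y * x
  unfold inn
  rw [h2, ldiv_mul]

end CommLoop

open CommLoop in
/-- `L_{x,y} = L_{x⁻¹\y}⁻¹ L_x L_y` (permutations acting on the right). -/
theorem stmt6 {Q : Type*} [CommLoop Q] [IsALoop Q] (x y : Q) :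
    ∀ z : Q, inn x y z = y * (x * ldiv (ldiv (inv x) y) z) := by
  intro z
  have h4 : (y * x) * inn x y (ldiv (ldiv (inv x) y) z) = inn x y z := by
    rw [inn_ldiv, inn_key, mul_ldiv]
  have h5 : (y * x) * inn x y (ldiv (ldiv (inv x) y) z)
      = y * (x * ldiv (ldiv (inv x) y) z) := mul_ldiv _ _
  rw [← h4, h5]
end

section
/- In a commutative A-loop, the division permutations satisfy D_{x^2} = D_x J D_x, where D_x(y) = y\x and J is inversion; equivalently, x^2 = (y\x)·(y^{-1}\x) for all x, y. -/
set_option linter.unusedSectionVars false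
namespace ALoopProof
open CommLoop

variable {Q : Type*} [CommLoop Q]

theorem mul_cancel {x : Q} {y z : Q} (h : x * y = x * z) : y = z := by
  have h1 := ldiv_mul x y
  rw [h, ldiv_mul] at h1; exact h1.symm

theorem one_ldiv (y : Q) : ldiv 1 y = y := by
  have := mul_ldiv (1:Q) y; rwa [CommLoop.one_mul] at this

theorem ldiv_self (x : Q) : ldiv x x = 1 := by
  have : x * ldiv x x = x * 1 := by rw [mul_ldiv, CommLoop.mul_one]
  exact mul_cancel this

theorem mul_inv (x : Q) : x * inv x = 1 := mul_ldiv x 1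

theorem inv_mul (x : Q) : inv x * x = 1 := (CommLoop.mul_comm _ _).trans (mul_inv x)

theorem eq_inv_of_mul_eq_one {x y : Q} (h : x * y = 1) : y = inv x := by
  have h2 : x * y = x * inv x := by rw [h, mul_inv]
  exact mul_cancel h2

theorem inv_inv (x : Q) : inv (inv x) = x := (eq_inv_of_mul_eq_one (inv_mul x)).symm

/-- D_x is an involution: (y\x)\x = y -/
theorem ldiv_ldiv (x y : Q) : ldiv (ldiv y x) x = y := by
  have h : ldiv y x * y = x := (CommLoop.mul_comm _ _).trans (mul_ldiv y x)
  have := ldiv_mul (ldiv y x) y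
  rw [h] at this; exact this

variable [IsALoop Q]

theorem inn_one (x y : Q) : inn x y 1 = 1 := by
  unfold inn; rw [CommLoop.mul_one, ldiv_self]

theorem inn_inv (x y z : Q) : inn x y (inv z) = inv (inn x y z) := by
  have h : inn x y z * inn x y (inv z) = 1 := by
    rw [← IsALoop.inn_mul, mul_inv, inn_one]
  exact eq_inv_of_mul_eq_one h

theorem inn_inj {x y : Q} {u v : Q} (h : inn x y u = inn x y v) : u = v := by
  unfold inn at h
  have h1 : (y*x) * ldiv (y*x) (y*(x*u)) = (y*x) * ldiv (y*x) (y*(x*v)) := by rw [h]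
  rw [mul_ldiv, mul_ldiv] at h1
  exact mul_cancel (mul_cancel h1)

/-- θ_x = L_{x⁻¹} L_x as inner mapping -/
theorem inn_theta (x z : Q) : inn x (inv x) z = inv x * (x * z) := by
  unfold inn; rw [inv_mul, one_ldiv]

theorem theta_mul (x u v : Q) : inv x * (x * (u * v)) = (inv x * (x * u)) * (inv x * (x * v)) := by
  rw [← inn_theta, ← inn_theta, ← inn_theta, IsALoop.inn_mul]

theorem theta_inv (x z : Q) : inv x * (x * inv z) = inv (inv x * (x * z)) := by
  rw [← inn_theta, ← inn_theta, inn_inv]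

/-- I2 : x⁻¹ (x x) = x -/
theorem I2 (x : Q) : inv x * (x * x) = x := by
  have h1 : inv x * (x * inv x) = inv x := by rw [mul_inv, CommLoop.mul_one]
  have h2 : inv x * (x * inv (inv x)) = inv (inv x) := by
    rw [theta_inv, h1]
  rw [inv_inv x] at h2
  exact h2

/-- COMM : x (x⁻¹ z) = x⁻¹ (x z) -/
theorem comm_inv (x z : Q) : x * (inv x * z) = inv x * (x * z) := by
  have h := theta_mul x x (ldiv x z)
  rw [I2 x] at h
  -- h : inv x * (x * (x * ldiv x z)) = x * (inv x * (x * ldiv x z))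
  rw [mul_ldiv] at h
  exact h.symm

/-- N1 : (a\(b\((ba)(ba)))) = ((a\(b\1)))⁻¹ -/
theorem N1 (a b : Q) :
    ldiv a (ldiv b ((b*a)*(b*a))) = inv (ldiv a (ldiv b 1)) := by
  have h1 : inn a b (ldiv a (ldiv b ((b*a)*(b*a)))) = b * a := by
    unfold inn; rw [mul_ldiv, mul_ldiv, ldiv_mul]
  have h2 : inn a b (ldiv a (ldiv b 1)) = inv (b*a) := by
    unfold inn; rw [mul_ldiv, mul_ldiv]; rfl
  have h3 : inn a b (inv (ldiv a (ldiv b ((b*a)*(b*a))))) = inv (b*a) := by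
    rw [inn_inv, h1]
  have h4 : inv (ldiv a (ldiv b ((b*a)*(b*a)))) = ldiv a (ldiv b 1) :=
    inn_inj (h3.trans h2.symm)
  rw [← h4, inv_inv]


theorem inv_def (x : Q) : ldiv x (1:Q) = inv x := rfl

theorem inn_def (x y z : Q) : ldiv (y*x) (y*(x*z)) = inn x y z := rfl

/-- inverse of the inner mapping -/
def jinn (x y z : Q) : Q := ldiv x (ldiv y ((y*x)*z))

theorem jinn_def (x y z : Q) : ldiv x (ldiv y ((y*x)*z)) = jinn x y z := rfl

theorem ji (x y z : Q) : jinn x y (inn x y z) = z := by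
  unfold jinn inn; rw [mul_ldiv, ldiv_mul, ldiv_mul]

theorem ij (x y z : Q) : inn x y (jinn x y z) = z := by
  unfold jinn inn; rw [mul_ldiv, mul_ldiv, ldiv_mul]

theorem Fphi_E515 (x1 x3 : Q) : (ldiv (x1 * x3) x1) = (inv (inn x3 x1 x3)) :=
  ((congrArg (fun ζ => (ldiv (x1 * x3) ζ)) (CommLoop.mul_one x1).symm)).trans
    (((congrArg (fun ζ => (ldiv (x1 * x3) (x1 * ζ))) (mul_inv x3).symm)).trans
    (((inn_def x3 x1 (inv x3))).trans
    ((inn_inv x3 x1 x3))))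

theorem Fphi (y0 y1 : Q) : (inn y0 y1 (inv y0)) = (ldiv (y1 * y0) y1) :=
  ((inn_inv y0 y1 y0)).trans
    ((Fphi_E515 y1 y0).symm)

theorem Fphi2_E320 (x1 x3 x4 : Q) : (ldiv (x1 * x3) (x1 * x4)) = (inn x3 x1 (ldiv x3 x4)) :=
  ((congrArg (fun ζ => (ldiv (x1 * x3) (x1 * ζ))) (mul_ldiv x3 x4).symm)).trans
    ((inn_def x3 x1 (ldiv x3 x4)))

theorem Fphi2 (y0 y1 y2 : Q) : (inn y0 y1 (ldiv y0 y2)) = (ldiv (y1 * y0) (y1 * y2)) :=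
  (Fphi2_E320 y1 y0 y2).symm

theorem F3_E216 (x0 x1 : Q) : (inv (inn x0 x1 x0)) = (ldiv (x1 * x0) x1) :=
  ((inn_inv x0 x1 x0).symm).trans
    ((Fphi x0 x1))

theorem F3 (y0 y1 : Q) : (inn y0 y1 y0) = (inv (ldiv (y1 * y0) y1)) :=
  ((inv_inv (inn y0 y1 y0)).symm).trans
    ((congrArg (fun ζ => (inv ζ)) (F3_E216 y0 y1)))

theorem I3_E205 (x0 x1 : Q) : (jinn x0 x1 (x1 * x0)) = (inv (ldiv x0 (inv x1))) :=
  ((jinn_def x0 x1 (x1 * x0)).symm).trans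
    ((N1 x0 x1))

theorem I3_E217 (x0 x1 : Q) : (inv (inn x0 x1 x0)) = (ldiv (x1 * x0) x1) :=
  ((inn_inv x0 x1 x0).symm).trans
    ((Fphi x0 x1))

theorem I3_E280 (x2 x3 : Q) : (ldiv x2 (x3 * x2)) = x3 :=
  ((congrArg (fun ζ => (ldiv x2 ζ)) (CommLoop.mul_comm x2 x3).symm)).trans
    ((ldiv_mul x2 x3))

theorem I3_E328 (x6 : Q) : (inn x6 x6 x6) = x6 :=
  ((inn_def x6 x6 x6).symm).trans
    ((I3_E280 (x6 * x6) x6))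

theorem I3_E462 (x2 x3 x4 : Q) : ((x3 * x2) * (inn x2 x3 x4)) = (x3 * (x2 * x4)) :=
  ((congrArg (fun ζ => ((x3 * x2) * ζ)) (inn_def x2 x3 x4).symm)).trans
    ((mul_ldiv (x3 * x2) (x3 * (x2 * x4))))

theorem I3_E657 (x1 x3 : Q) : (ldiv (x1 * x3) x1) = (inv (inn x3 x1 x3)) :=
  ((congrArg (fun ζ => (ldiv (x1 * x3) ζ)) (CommLoop.mul_one x1).symm)).trans
    (((congrArg (fun ζ => (ldiv (x1 * x3) (x1 * ζ))) (mul_inv x3).symm)).trans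
    (((inn_def x3 x1 (inv x3))).trans
    ((inn_inv x3 x1 x3))))

theorem I3_E715 (x8 : Q) : (inv x8) = (ldiv (x8 * x8) x8) :=
  ((congrArg (fun ζ => (inv ζ)) (I3_E328 x8).symm)).trans
    ((I3_E217 x8 x8))

theorem I3_E925 (x10 : Q) : ((x10 * x10) * (inv x10)) = x10 :=
  ((congrArg (fun ζ => ((x10 * x10) * ζ)) (I3_E715 x10))).trans
    ((mul_ldiv (x10 * x10) x10))

theorem I3_E1010 (x10 : Q) : (ldiv (inv x10) x10) = (x10 * x10) :=
  ((congrArg (fun ζ => (ldiv ζ x10)) (I3_E715 x10))).trans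
    ((ldiv_ldiv x10 (x10 * x10)))

theorem I3_E2002 (x11 : Q) : (ldiv x11 (inv x11)) = ((inv x11) * (inv x11)) :=
  ((congrArg (fun ζ => (ldiv ζ (inv x11))) (inv_inv x11).symm)).trans
    ((I3_E1010 (inv x11)))

theorem I3_E7793 (x5 x6 x7 : Q) : ((x6 * x5) * (inv (inn x5 x6 x7))) = (x6 * (x5 * (inv x7))) :=
  ((congrArg (fun ζ => ((x6 * x5) * ζ)) (inn_inv x5 x6 x7).symm)).trans
    ((I3_E462 x5 x6 (inv x7)))

theorem I3_E23100 (x12 : Q) : (jinn (inv x12) (x12 * x12) x12) = (inv (ldiv (inv x12) (inv (x12 * x12)))) :=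
  ((congrArg (fun ζ => (jinn (inv x12) (x12 * x12) ζ)) (I3_E925 x12).symm)).trans
    ((I3_E205 (inv x12) (x12 * x12)))

theorem I3_E23821 (x12 : Q) : x12 = (inn (inv x12) (x12 * x12) x12) :=
  ((ldiv_mul x12 x12).symm).trans
    (((congrArg (fun ζ => (ldiv ζ (x12 * x12))) (I3_E925 x12).symm)).trans
    (((I3_E217 (inv x12) (x12 * x12)).symm).trans
    (((congrArg (fun ζ => (inv ζ)) (inn_inv (inv x12) (x12 * x12) x12))).trans
    ((inv_inv (inn (inv x12) (x12 * x12) x12))))))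

theorem I3_E23925 (x15 : Q) : (jinn (inv x15) (x15 * x15) x15) = x15 :=
  ((congrArg (fun ζ => (jinn (inv x15) (x15 * x15) ζ)) (I3_E23821 x15))).trans
    ((ji (inv x15) (x15 * x15) x15))

theorem I3_E24050 (x28 : Q) : (inv (ldiv (inv x28) (inv (x28 * x28)))) = x28 :=
  ((I3_E23100 x28).symm).trans
    ((I3_E23925 x28))

theorem I3_E24116 (x29 : Q) : (inv x29) = (ldiv (inv x29) (inv (x29 * x29))) :=
  ((congrArg (fun ζ => (inv ζ)) (I3_E24050 x29).symm)).trans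
    ((inv_inv (ldiv (inv x29) (inv (x29 * x29)))))

theorem I3_E24199 (x31 : Q) : (ldiv x31 (inv x31)) = (inv (x31 * x31)) :=
  ((I3_E2002 x31)).trans
    (((congrArg (fun ζ => ((inv x31) * ζ)) (I3_E24116 x31))).trans
    ((mul_ldiv (inv x31) (inv (x31 * x31)))))

theorem I3_E24283 (x33 : Q) : (x33 * (inv (x33 * x33))) = (inv x33) :=
  ((congrArg (fun ζ => (x33 * ζ)) (I3_E24199 x33).symm)).trans
    ((mul_ldiv x33 (inv x33)))

theorem I3 (y0 y1 : Q) : (y1 * (inv y0)) = ((y1 * y0) * ((ldiv (y1 * y0) y1) * (ldiv (y1 * y0) y1))) :=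
  ((congrArg (fun ζ => (y1 * ζ)) (I3_E24283 y0).symm)).trans
    (((I3_E7793 y0 y1 (y0 * y0)).symm).trans
    (((congrArg (fun ζ => ((y1 * y0) * (inv ζ))) (IsALoop.inn_mul y0 y1 y0 y0))).trans
    (((congrArg (fun ζ => ((y1 * y0) * ζ)) (I3_E24199 (inn y0 y1 y0)).symm)).trans
    (((congrArg (fun ζ => ((y1 * y0) * ζ)) (I3_E2002 (inn y0 y1 y0)))).trans
    (((congrArg (fun ζ => ((y1 * y0) * ((inv (inn y0 y1 y0)) * ζ))) (I3_E657 y1 y0).symm)).trans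
    ((congrArg (fun ζ => ((y1 * y0) * (ζ * (ldiv (y1 * y0) y1)))) (I3_E657 y1 y0).symm)))))))

theorem I4_E162 (x0 x2 : Q) : (x0 * ((inv x0) * x2)) = (inn x0 (inv x0) x2) :=
  ((comm_inv x0 x2)).trans
    ((inn_theta x0 x2).symm)

theorem I4_E443 (x1 x3 x4 : Q) : (ldiv (x1 * x3) (x1 * x4)) = (inn x3 x1 (ldiv x3 x4)) :=
  ((congrArg (fun ζ => (ldiv (x1 * x3) (x1 * ζ))) (mul_ldiv x3 x4).symm)).trans
    ((inn_def x3 x1 (ldiv x3 x4)))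

theorem I4_E495 (x2 x3 x4 : Q) : ((x3 * x2) * (inn x2 x3 x4)) = (x3 * (x2 * x4)) :=
  ((congrArg (fun ζ => ((x3 * x2) * ζ)) (inn_def x2 x3 x4).symm)).trans
    ((mul_ldiv (x3 * x2) (x3 * (x2 * x4))))

theorem I4_E690 (x1 x3 : Q) : (ldiv (x1 * x3) x1) = (inv (inn x3 x1 x3)) :=
  ((congrArg (fun ζ => (ldiv (x1 * x3) ζ)) (CommLoop.mul_one x1).symm)).trans
    (((congrArg (fun ζ => (ldiv (x1 * x3) (x1 * ζ))) (mul_inv x3).symm)).trans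
    (((inn_def x3 x1 (inv x3))).trans
    ((inn_inv x3 x1 x3))))

theorem I4_E1022 (x4 x5 x6 x7 : Q) : ((inv (inn x5 x6 x7)) * (inn x5 x6 x4)) = (inn x5 x6 ((inv x7) * x4)) :=
  ((congrArg (fun ζ => (ζ * (inn x5 x6 x4))) (inn_inv x5 x6 x7).symm)).trans
    ((IsALoop.inn_mul x5 x6 (inv x7) x4).symm)

theorem I4_E1104 (x3 x4 : Q) : ((inv x3) * x4) = (inn x3 (inv x3) (ldiv x3 x4)) :=
  ((congrArg (fun ζ => ((inv x3) * ζ)) (mul_ldiv x3 x4).symm)).trans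
    ((inn_theta x3 (ldiv x3 x4)).symm)

theorem I4 (y0 y1 y2 : Q) : (y1 * ((inv y0) * y2)) = ((y1 * y0) * ((ldiv (y1 * y0) y1) * (ldiv (y1 * y0) (y1 * y2)))) :=
  ((congrArg (fun ζ => (y1 * ζ)) (I4_E1104 y0 y2))).trans
    (((congrArg (fun ζ => (y1 * ζ)) (I4_E162 y0 (ldiv y0 y2)).symm)).trans
    (((I4_E495 y0 y1 ((inv y0) * (ldiv y0 y2))).symm).trans
    (((congrArg (fun ζ => ((y1 * y0) * ζ)) (I4_E1022 (ldiv y0 y2) y0 y1 y0).symm)).trans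
    (((congrArg (fun ζ => ((y1 * y0) * (ζ * (inn y0 y1 (ldiv y0 y2))))) (I4_E690 y1 y0).symm)).trans
    ((congrArg (fun ζ => ((y1 * y0) * ((ldiv (y1 * y0) y1) * ζ))) (I4_E443 y1 y0 y2).symm))))))

theorem F4a (y0 y1 : Q) : (inn y0 y1 (inv y1)) = (inv (ldiv (y1 * y0) (y1 * (y1 * y0)))) :=
  ((inn_inv y0 y1 y1)).trans
    (((congrArg (fun ζ => (inv ζ)) (inn_def y0 y1 y1).symm)).trans
    ((congrArg (fun ζ => (inv (ldiv (y1 * y0) (y1 * ζ)))) (CommLoop.mul_comm y1 y0).symm)))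

theorem N2_E1882 (x3 x4 x5 : Q) : (jinn x3 x4 (inv (inn x3 x4 x5))) = (inv x5) :=
  ((congrArg (fun ζ => (jinn x3 x4 ζ)) (inn_inv x3 x4 x5).symm)).trans
    ((ji x3 x4 (inv x5)))

theorem N2_E6856 (x6 x7 x8 : Q) : (jinn x6 x7 (inv x8)) = (inv (jinn x6 x7 x8)) :=
  ((congrArg (fun ζ => (jinn x6 x7 (inv ζ))) (ij x6 x7 x8).symm)).trans
    ((N2_E1882 x6 x7 (jinn x6 x7 x8)))

theorem N2 (y0 y1 y2 : Q) : (inv (jinn y0 y1 y2)) = (jinn y0 y1 (inv y2)) :=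
  (N2_E6856 y0 y1 y2).symm

theorem X1_E561 (x2 x3 x4 : Q) : (ldiv (x4 * x3) (x3 * (x4 * x2))) = (inn x4 x3 x2) :=
  ((congrArg (fun ζ => (ldiv ζ (x3 * (x4 * x2)))) (CommLoop.mul_comm x3 x4).symm)).trans
    ((inn_def x4 x3 x2))

theorem X1_E1514 (x0 x1 x4 : Q) : (ldiv x0 (ldiv x1 x4)) = (jinn x0 x1 (ldiv (x1 * x0) x4)) :=
  ((congrArg (fun ζ => (ldiv x0 (ldiv x1 ζ))) (mul_ldiv (x1 * x0) x4).symm)).trans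
    ((jinn_def x0 x1 (ldiv (x1 * x0) x4)))

theorem X1_E7338 (x0 x1 x3 x4 : Q) : (jinn x0 x1 (inn x3 x4 x3)) = (inv (jinn x0 x1 (ldiv (x4 * x3) x4))) :=
  ((congrArg (fun ζ => (jinn x0 x1 ζ)) (F3 x3 x4))).trans
    ((N2 x0 x1 (ldiv (x4 * x3) x4)).symm)

theorem X1_E37995 (x7 x8 x9 : Q) : (jinn x8 x9 (inn x9 x8 x7)) = (ldiv x8 (ldiv x9 (x8 * (x9 * x7)))) :=
  ((congrArg (fun ζ => (jinn x8 x9 ζ)) (X1_E561 x7 x8 x9).symm)).trans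
    ((X1_E1514 x8 x9 (x8 * (x9 * x7))).symm)

theorem X1_E38120 (x4 x5 x6 : Q) : (jinn x6 x5 (ldiv (x6 * x5) x4)) = (ldiv x6 (ldiv x5 x4)) :=
  ((congrArg (fun ζ => (jinn x6 x5 (ldiv ζ x4))) (CommLoop.mul_comm x5 x6).symm)).trans
    ((X1_E1514 x6 x5 x4).symm)

theorem X1 (y0 y1 : Q) : (inv (ldiv y0 (ldiv y1 y0))) = (ldiv y0 (ldiv y1 (y0 * (y1 * y1)))) :=
  ((congrArg (fun ζ => (inv ζ)) (X1_E38120 y0 y1 y0).symm)).trans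
    (((X1_E7338 y0 y1 y1 y0).symm).trans
    ((X1_E37995 y1 y0 y1)))

theorem AAIPa_E210 (x0 x1 : Q) : (jinn x0 x1 (x1 * x0)) = (inv (ldiv x0 (inv x1))) :=
  ((jinn_def x0 x1 (x1 * x0)).symm).trans
    ((N1 x0 x1))

theorem AAIPa_E285 (x2 x3 : Q) : (ldiv x2 (x3 * x2)) = x3 :=
  ((congrArg (fun ζ => (ldiv x2 ζ)) (CommLoop.mul_comm x2 x3).symm)).trans
    ((ldiv_mul x2 x3))

theorem AAIPa_E583 (x2 x3 x4 : Q) : (ldiv (x4 * x3) (x3 * (x4 * x2))) = (inn x4 x3 x2) :=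
  ((congrArg (fun ζ => (ldiv ζ (x3 * (x4 * x2)))) (CommLoop.mul_comm x3 x4).symm)).trans
    ((inn_def x4 x3 x2))

theorem AAIPa_E623 (x4 x8 : Q) : x8 = (inn x4 x8 x8) :=
  ((AAIPa_E285 (x4 * x8) x8).symm).trans
    ((AAIPa_E583 x8 x8 x4))

theorem AAIPa_E832 (x1 x3 : Q) : (ldiv (x1 * (inv x3)) x1) = (inn (inv x3) x1 x3) :=
  ((congrArg (fun ζ => (ldiv (x1 * (inv x3)) ζ)) (CommLoop.mul_one x1).symm)).trans
    (((congrArg (fun ζ => (ldiv (x1 * (inv x3)) (x1 * ζ))) (inv_mul x3).symm)).trans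
    ((inn_def (inv x3) x1 x3)))

theorem AAIPa_E918 (x2 x3 x5 x6 : Q) : (ldiv (inn x2 x3 x5) (inn x2 x3 (x5 * x6))) = (inn x2 x3 x6) :=
  ((congrArg (fun ζ => (ldiv (inn x2 x3 x5) ζ)) (IsALoop.inn_mul x2 x3 x5 x6))).trans
    ((ldiv_mul (inn x2 x3 x5) (inn x2 x3 x6)))

theorem AAIPa_E17074 (x3 x5 : Q) : (ldiv (inn (inv x5) x3 x5) x3) = (x3 * (inv x5)) :=
  ((congrArg (fun ζ => (ldiv ζ x3)) (AAIPa_E832 x3 x5).symm)).trans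
    ((ldiv_ldiv x3 (x3 * (inv x5))))

theorem AAIPa_E19315 (x2 x3 x7 x8 : Q) : (ldiv (inn x2 x3 x7) (inn x2 x3 x8)) = (inn x2 x3 (ldiv x7 x8)) :=
  ((congrArg (fun ζ => (ldiv (inn x2 x3 x7) (inn x2 x3 ζ))) (mul_ldiv x7 x8).symm)).trans
    ((AAIPa_E918 x2 x3 x7 (ldiv x7 x8)))

theorem AAIPa_E65962 (x7 x13 x17 : Q) : (ldiv (inn x13 x17 x7) x17) = (inn x13 x17 (ldiv x7 x17)) :=
  ((congrArg (fun ζ => (ldiv (inn x13 x17 x7) ζ)) (AAIPa_E623 x13 x17))).trans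
    ((AAIPa_E19315 x13 x17 x7 x17))

theorem AAIPa_E66084 (x21 x23 : Q) : (x21 * (inv x23)) = (inn (inv x23) x21 (ldiv x23 x21)) :=
  ((AAIPa_E17074 x21 x23).symm).trans
    ((AAIPa_E65962 x23 (inv x23) x21))

theorem AAIPa_E66267 (x24 x26 : Q) : (inv (ldiv (inv x26) (inv x24))) = (ldiv x26 x24) :=
  ((AAIPa_E210 (inv x26) x24).symm).trans
    (((congrArg (fun ζ => (jinn (inv x26) x24 ζ)) (AAIPa_E66084 x24 x26))).trans
    ((ji (inv x26) x24 (ldiv x26 x24))))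

theorem AAIPa_E67014 (x25 x27 : Q) : (inv (ldiv x27 x25)) = (ldiv (inv x27) (inv x25)) :=
  ((congrArg (fun ζ => (inv ζ)) (AAIPa_E66267 x25 x27).symm)).trans
    ((inv_inv (ldiv (inv x27) (inv x25))))

theorem AAIPa_E68145 (x27 x29 : Q) : ((inv x29) * (inv (ldiv x29 x27))) = (inv x27) :=
  ((congrArg (fun ζ => ((inv x29) * ζ)) (AAIPa_E67014 x27 x29))).trans
    ((mul_ldiv (inv x29) (inv x27)))

theorem AAIPa_E70288 (x30 x31 : Q) : ((inv x30) * (inv x31)) = (inv (x30 * x31)) :=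
  ((congrArg (fun ζ => ((inv x30) * (inv ζ))) (ldiv_mul x30 x31).symm)).trans
    ((AAIPa_E68145 (x30 * x31) x30))

theorem AAIPa (y0 y1 : Q) : (inv (y0 * y1)) = ((inv y0) * (inv y1)) :=
  (AAIPa_E70288 y0 y1).symm

/-- AAIP : (xy)⁻¹ = x⁻¹ y⁻¹  (to be proven) -/
theorem aaip (x y : Q) : inv (x * y) = inv x * inv y := AAIPa x y

theorem inv_ldiv (x y : Q) : inv (ldiv x y) = ldiv (inv x) (inv y) := by
  have h : inv x * inv (ldiv x y) = inv y := by
    rw [← aaip, mul_ldiv]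
  have := ldiv_mul (inv x) (inv (ldiv x y))
  rw [h] at this; exact this.symm

theorem target1 (x y : Q) : ldiv y (x * x) = ldiv (inv (ldiv y x)) x := by
  set a := ldiv y x with ha
  have hya : y * a = x := mul_ldiv y x
  have hN := N1 a y
  rw [hya] at hN
  -- hN : ldiv a (ldiv y (x*x)) = inv (ldiv a (ldiv y 1))
  have hinv : inv (ldiv a (ldiv y 1)) = ldiv (inv a) y := by
    have e1 : ldiv y (1:Q) = inv y := rfl
    rw [e1, inv_ldiv, inv_inv]
  rw [hinv] at hN
  have h5 : ldiv y (x*x) = a * ldiv (inv a) y := by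
    have := mul_ldiv a (ldiv y (x*x))
    rw [hN] at this; exact this.symm
  rw [h5]
  -- claim : a * ((inv a)\y) = (inv a)\x
  have h6 : inv a * (a * ldiv (inv a) y) = x := by
    rw [← comm_inv, mul_ldiv]
    exact (CommLoop.mul_comm _ _).trans hya
  have := ldiv_mul (inv a) (a * ldiv (inv a) y)
  rw [h6] at this; exact this.symm

end ALoopProof

open CommLoop in
/-- `D_{x²} = D_x J D_x`, equivalently `x² = (y\x)·(y⁻¹\x)`. -/
theorem stmt7 {Q : Type*} [CommLoop Q] [IsALoop Q] (x : Q) :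
    (∀ y : Q, ldiv y (x * x) = ldiv (inv (ldiv y x)) x) ∧
    (∀ y : Q, x * x = ldiv y x * ldiv (inv y) x) := by
  constructor
  · exact fun y => ALoopProof.target1 x y
  · intro y
    have h := ALoopProof.target1 x (ldiv y x)
    rw [ALoopProof.ldiv_ldiv] at h
    have h2 := CommLoop.mul_ldiv (ldiv y x) (x * x)
    rw [h] at h2
    exact h2.symm
end

section
/- A finite commutative loop Q is uniquely 2-divisible (the squaring map x ↦ x^2 is a permutation of Q) if and only if Q has odd order. -/
open scoped Classical in
open CommLoop in
private lemma stmt8_key {Q : Type*} [CommLoop Q] [Fintype Q] (a : Q) :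
    Fintype.card {x : Q // x * x = a} ≡ Fintype.card Q [MOD 2] := by
  classical
  have fact2 : Fact (Nat.Prime 2) := ⟨Nat.prime_two⟩
  set P := {p : Q × Q // p.1 * p.2 = a} with hP
  -- P ≃ Q
  have e : Q ≃ P :=
    { toFun := fun x => ⟨(x, ldiv x a), mul_ldiv x a⟩
      invFun := fun p => p.1.1
      left_inv := fun x => rfl
      right_inv := fun p => by
        rcases p with ⟨⟨x, y⟩, h⟩
        apply Subtype.ext
        simp only []
        have : ldiv x a = y := by rw [← h, ldiv_mul]
        rw [this]
      }
  -- the swap involution on P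
  let f : Function.End P := fun p => ⟨(p.1.2, p.1.1), by rw [CommLoop.mul_comm]; exact p.2⟩
  have hf : f ^ 2 ^ 1 = 1 := by
    have h2 : f ^ 2 ^ 1 = f * f := by rw [pow_one, sq]
    rw [h2]
    funext p
    show f (f p) = p
    apply Subtype.ext
    rfl
  have h1 := Equiv.Perm.card_fixedPoints_modEq (p := 2) (n := 1) hf
  have e2 : Function.fixedPoints f ≃ {x : Q // x * x = a} :=
    { toFun := fun p => ⟨p.1.1.1, by
        have h2 : p.1.1.2 = p.1.1.1 := congrArg (fun q => (q : P).1.1) p.2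
        have := p.1.2
        rw [h2] at this
        exact this⟩
      invFun := fun x => ⟨⟨(x.1, x.1), x.2⟩, Subtype.ext rfl⟩
      left_inv := fun p => by
        apply Subtype.ext
        apply Subtype.ext
        have h2 : p.1.1.2 = p.1.1.1 := congrArg (fun q => (q : P).1.1) p.2
        exact Prod.ext rfl h2.symm
      right_inv := fun x => rfl }
  calc Fintype.card {x : Q // x * x = a}
      = Fintype.card (Function.fixedPoints f) := (Fintype.card_congr e2).symm
    _ ≡ Fintype.card P [MOD 2] := h1.symm
    _ = Fintype.card Q := (Fintype.card_congr e).symm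

/-- A finite commutative loop is uniquely 2-divisible iff it has odd order. -/
theorem stmt8 {Q : Type*} [CommLoop Q] [Fintype Q] :
    Function.Bijective (fun x : Q => x * x) ↔ Odd (Fintype.card Q) := by
  classical
  constructor
  · intro h
    have a : Q := 1
    obtain ⟨x0, hx0⟩ := h.surjective a
    have hcard : Fintype.card {x : Q // x * x = a} = 1 := by
      apply Fintype.card_eq_one_iff.mpr
      refine ⟨⟨x0, hx0⟩, fun y => ?_⟩
      apply Subtype.ext
      exact h.injective (y.2.trans hx0.symm)
    have := stmt8_key a
    rw [hcard] at this
    rw [Nat.odd_iff]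
    unfold Nat.ModEq at this
    omega
  · intro hodd
    have hsurj : Function.Surjective (fun x : Q => x * x) := by
      intro a
      have h := stmt8_key a
      have : Fintype.card {x : Q // x * x = a} % 2 = 1 := by
        rw [Nat.ModEq] at h
        rw [h, ← Nat.odd_iff]
        exact hodd
      have hne : Fintype.card {x : Q // x * x = a} ≠ 0 := by omega
      obtain ⟨⟨x, hx⟩⟩ := Fintype.card_pos_iff.mp (Nat.pos_of_ne_zero hne)
      exact ⟨x, hx⟩
    exact Finite.surjective_iff_bijective.mp hsurj
end
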